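/- arXiv:1712.09270 — 6 statements merged into one kernel-verified Lean document; each statement's English description precedes it below -/
import Mathlib

section
/- Let N be a finite-dimensional ℂ-vector space equipped with a decreasing filtration by subspaces N = N₁ ⊇ N₂ ⊇ … ⊇ N_{r+1} = 0, and let μ : N × N → N be a symmetric ℂ-bilinear map satisfying μ(Nᵢ × Nⱼ) ⊆ N_{i+j} for all i, j (with the convention N_k = 0 for k ≥ r + 1). Let V be a ℂ-vector space and ψ₁ : V → N a linear map such that N = range(ψ₁) + span_ℂ{μ(x, y) : x, y ∈ N}. If g : N → N is a ℂ-linear map such that g ∘ ψ₁ = ψ₁ and g(μ(x, y)) = μ(g(x), g(y)) for all x, y ∈ N, then g is the identity map of N. (This is the freeness statement underlying the fact that the group of filtered linear automorphisms acts freely on the space of surjective structures defining the nonassociative Hilbert scheme.) -/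
/-- Freeness of the action of filtered linear automorphisms on the nonassociative
Hilbert scheme: if `N` carries a filtration `N = F 1 ⊇ F 2 ⊇ … ⊇ F (r+1) = 0`, a
symmetric bilinear multiplication `μ` compatible with the filtration, and a linear map
`ψ : V → N` such that `N` is spanned by the image of `ψ` together with all products
`μ x y`, then any linear map `g : N → N` fixing `ψ` and respecting `μ` is the
identity. -/
theorem filtered_automorphism_eq_id
    (r : ℕ) (V N : Type*) [AddCommGroup V] [Module ℂ V]
    [AddCommGroup N] [Module ℂ N] [FiniteDimensional ℂ N]
    (F : ℕ → Submodule ℂ N)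
    (hF1 : F 1 = ⊤)
    (hdec : ∀ i, 1 ≤ i → F (i + 1) ≤ F i)
    (hbot : ∀ k, r + 1 ≤ k → F k = ⊥)
    (μ : N →ₗ[ℂ] N →ₗ[ℂ] N)
    (hsymm : ∀ x y : N, μ x y = μ y x)
    (hfilt : ∀ i j, 1 ≤ i → 1 ≤ j → ∀ x y : N, x ∈ F i → y ∈ F j → μ x y ∈ F (i + j))
    (ψ : V →ₗ[ℂ] N)
    (hspan : LinearMap.range ψ ⊔ Submodule.span ℂ {z : N | ∃ x y : N, z = μ x y} = ⊤)
    (g : N →ₗ[ℂ] N)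
    (hgψ : g.comp ψ = ψ)
    (hgμ : ∀ x y : N, g (μ x y) = μ (g x) (g y)) :
    g = LinearMap.id := by
  have hψ : ∀ v, g (ψ v) = ψ v := fun v => LinearMap.congr_fun hgψ v
  have htop : ∀ x : N, x ∈ F 1 := fun x => hF1 ▸ Submodule.mem_top
  have key : ∀ m : ℕ, 2 ≤ m → ∀ x : N, g x - x ∈ F m := by
    intro m hm
    induction m with
    | zero => omega
    | succ m ih =>
      have hsub : (⊤ : Submodule ℂ N) ≤ (F (m + 1)).comap (g - LinearMap.id) := by
        rw [← hspan]
        apply sup_le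
        · rintro _ ⟨v, rfl⟩
          simp only [SetLike.mem_coe, Submodule.mem_comap, LinearMap.sub_apply,
            LinearMap.id_coe, id_eq, hψ, sub_self]
          exact Submodule.zero_mem _
        · rw [Submodule.span_le]
          rintro _ ⟨x, y, rfl⟩
          simp only [SetLike.mem_coe, Submodule.mem_comap, LinearMap.sub_apply, LinearMap.id_coe, id_eq]
          rw [hgμ]
          rcases Nat.lt_or_ge m 2 with h2 | h2
          · -- m + 1 = 2
            have hm2 : m + 1 = 2 := by omega
            rw [hm2]
            exact Submodule.sub_mem _ (hfilt 1 1 le_rfl le_rfl _ _ (htop _) (htop _))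
              (hfilt 1 1 le_rfl le_rfl _ _ (htop _) (htop _))
          · have hDx := ih (by omega) x
            have hDy := ih (by omega) y
            have hexp : μ (g x) (g y) - μ x y = μ (g x - x) (g y) + μ x (g y - y) := by
              simp only [map_sub, LinearMap.sub_apply]
              abel
            rw [hexp]
            have h1 : μ (g x - x) (g y) ∈ F (m + 1) :=
              hfilt m 1 (by omega) le_rfl _ _ hDx (htop _)
            have h2' : μ x (g y - y) ∈ F (m + 1) := by
              have := hfilt 1 m le_rfl (by omega) x (g y - y) (htop x) hDy
              rwa [Nat.add_comm] at this
            exact Submodule.add_mem _ h1 h2'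
      intro x
      have := hsub (Submodule.mem_top (x := x))
      simpa using this
  ext x
  have h := key (r + 2) (by omega) x
  rw [hbot (r + 2) (by omega)] at h
  have : g x - x = 0 := h
  simpa [sub_eq_zero] using this
end

section
/- Let a, b, c, d, f, g, h ∈ ℂ and define a commutative ℂ-bilinear multiplication on ℂ⁴ with basis e₁, e₂, e₃, e₄ by e₁·e₁ = a·e₂ + b·e₃ + c·e₄, e₁·e₂ = e₂·e₁ = d·e₃ + f·e₄, e₁·e₃ = e₃·e₁ = g·e₄, e₂·e₂ = h·e₄, and all other products of basis vectors equal to zero. Then this multiplication is associative if and only if a·h = d·g. (The associativity condition for the dimension vector (1,1,1,1) reduces to the single quadratic equation q₁₁²·q₂₂⁴ − q₁₃⁴·q₁₂³ = 0.) -/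
set_option maxHeartbeats 1000000


/-- The commutative multiplication on `ℂ⁴` determined by
`e₁·e₁ = a·e₂ + b·e₃ + c·e₄`, `e₁·e₂ = e₂·e₁ = d·e₃ + f·e₄`,
`e₁·e₃ = e₃·e₁ = g·e₄`, `e₂·e₂ = h·e₄`, all other products of basis vectors zero. -/
def mulDim4 (a b c d f g h : ℂ) (x y : Fin 4 → ℂ) : Fin 4 → ℂ :=
  ![0,
    a * (x 0 * y 0),
    b * (x 0 * y 0) + d * (x 0 * y 1 + x 1 * y 0),
    c * (x 0 * y 0) + f * (x 0 * y 1 + x 1 * y 0) + g * (x 0 * y 2 + x 2 * y 0)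
      + h * (x 1 * y 1)]

/-- The associativity condition for the dimension vector `(1,1,1,1)` reduces to the
single quadratic equation `a·h = d·g`. -/
theorem mulDim4_assoc_iff (a b c d f g h : ℂ) :
    (∀ x y z : Fin 4 → ℂ,
        mulDim4 a b c d f g h (mulDim4 a b c d f g h x y) z
          = mulDim4 a b c d f g h x (mulDim4 a b c d f g h y z))
      ↔ a * h = d * g := by
  constructor
  · intro H
    have := congrFun (H ![1,0,0,0] ![1,0,0,0] ![0,1,0,0]) 3
    simp [mulDim4] at this
    linear_combination this
  · intro H x y z
    funext i
    fin_cases i <;>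
      simp [mulDim4, -mul_eq_mul_left_iff, -mul_eq_mul_right_iff] <;>
      ring_nf <;>
      linear_combination (x 0 * y 0 * z 1 - x 1 * y 0 * z 0) * H
end

section
/- Let a, b, c, d, f, g, h ∈ ℂ with a·h = d·g, a ≠ 0, d ≠ 0, and g ≠ 0, and equip ℂ⁴ with basis e₁, e₂, e₃, e₄ and the commutative bilinear multiplication e₁·e₁ = a·e₂ + b·e₃ + c·e₄, e₁·e₂ = e₂·e₁ = d·e₃ + f·e₄, e₁·e₃ = e₃·e₁ = g·e₄, e₂·e₂ = h·e₄, all other products of basis vectors zero. Then the resulting nonunital commutative associative ℂ-algebra is isomorphic to the model algebra A₄, i.e. the 4-dimensional nonunital ℂ-algebra with basis f₁, f₂, f₃, f₄ and products fᵢ·fⱼ = f_{i+j} when i + j ≤ 4 and fᵢ·fⱼ = 0 when i + j > 4. (A generic algebra on the associativity hypersurface with dimension vector (1,1,1,1) is isomorphic to A₄ = 𝔪_x/(x⁵).) -/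
/-- The multiplication of the model algebra `A₄ = 𝔪_x/(x⁵)` with basis `f₁, f₂, f₃, f₄`
(`fᵢ` corresponding to `xⁱ`): `fᵢ·fⱼ = f_{i+j}` if `i + j ≤ 4` and `0` otherwise. -/
def mulA4 (x y : Fin 4 → ℂ) : Fin 4 → ℂ :=
  ![0,
    x 0 * y 0,
    x 0 * y 1 + x 1 * y 0,
    x 0 * y 2 + x 1 * y 1 + x 2 * y 0]

/-- Forward map: sends the model basis vector `fᵢ` to `u^i` where `u = e₁`. -/
def a4Fwd (a b c d f g : ℂ) (v : Fin 4 → ℂ) : Fin 4 → ℂ :=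
  ![v 0,
    a * v 1,
    b * v 1 + a * d * v 2,
    c * v 1 + (a * f + b * g) * v 2 + a * d * g * v 3]

/-- Inverse of `a4Fwd`. -/
noncomputable def a4Inv (a b c d f g : ℂ) (v : Fin 4 → ℂ) : Fin 4 → ℂ :=
  ![v 0,
    v 1 / a,
    (v 2 - b / a * v 1) / (a * d),
    (v 3 - c / a * v 1 - (a * f + b * g) * ((v 2 - b / a * v 1) / (a * d))) / (a * d * g)]

/-- `a4Fwd` and `a4Inv` are mutually inverse. -/
theorem a4Inv_a4Fwd (a b c d f g : ℂ) (ha : a ≠ 0) (hd : d ≠ 0) (hg : g ≠ 0)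
    (v : Fin 4 → ℂ) : a4Inv a b c d f g (a4Fwd a b c d f g v) = v := by
  funext i
  fin_cases i
  · rfl
  · show a * v 1 / a = v 1
    field_simp
  · show ((b * v 1 + a * d * v 2) - b / a * (a * v 1)) / (a * d) = v 2
    rw [div_eq_iff (by simp [ha, hd] : a * d ≠ 0)]
    field_simp
    ring
  · show ((c * v 1 + (a * f + b * g) * v 2 + a * d * g * v 3) - c / a * (a * v 1)
        - (a * f + b * g) * (((b * v 1 + a * d * v 2) - b / a * (a * v 1)) / (a * d)))
          / (a * d * g) = v 3
    rw [div_eq_iff (by simp [ha, hd, hg] : a * d * g ≠ 0)]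
    field_simp
    ring

theorem a4Fwd_a4Inv (a b c d f g : ℂ) (ha : a ≠ 0) (hd : d ≠ 0) (hg : g ≠ 0)
    (v : Fin 4 → ℂ) : a4Fwd a b c d f g (a4Inv a b c d f g v) = v := by
  funext i
  fin_cases i
  · rfl
  · show a * (v 1 / a) = v 1
    field_simp
  · show b * (v 1 / a) + a * d * ((v 2 - b / a * v 1) / (a * d)) = v 2
    field_simp
    ring
  · show c * (v 1 / a) + (a * f + b * g) * ((v 2 - b / a * v 1) / (a * d))
        + a * d * g * ((v 3 - c / a * v 1
            - (a * f + b * g) * ((v 2 - b / a * v 1) / (a * d))) / (a * d * g)) = v 3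
    rw [mul_comm (a * d * g), div_mul_cancel₀ _ (by simp [ha, hd, hg] : a * d * g ≠ 0)]
    field_simp
    ring

/-- A generic algebra on the associativity hypersurface `a·h = d·g` with dimension
vector `(1,1,1,1)` (i.e. with `a ≠ 0`, `d ≠ 0`, `g ≠ 0`) is isomorphic as a nonunital
`ℂ`-algebra to the model algebra `A₄`. -/
theorem mulDim4_iso_A4 (a b c d f g h : ℂ)
    (hassoc : a * h = d * g) (ha : a ≠ 0) (hd : d ≠ 0) (hg : g ≠ 0) :
    ∃ e : (Fin 4 → ℂ) ≃ₗ[ℂ] (Fin 4 → ℂ),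
      ∀ x y : Fin 4 → ℂ, e (mulDim4 a b c d f g h x y) = mulA4 (e x) (e y) := by
  let E : (Fin 4 → ℂ) ≃ₗ[ℂ] (Fin 4 → ℂ) :=
    { toFun := a4Fwd a b c d f g
      invFun := a4Inv a b c d f g
      map_add' := by
        intro u v
        funext i
        fin_cases i <;> simp [a4Fwd] <;> ring
      map_smul' := by
        intro r v
        funext i
        fin_cases i <;> simp [a4Fwd] <;> ring
      left_inv := a4Inv_a4Fwd a b c d f g ha hd hg
      right_inv := a4Fwd_a4Inv a b c d f g ha hd hg }
  have key : ∀ x y : Fin 4 → ℂ,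
      E (mulA4 x y) = mulDim4 a b c d f g h (E x) (E y) := by
    intro x y
    show a4Fwd a b c d f g (mulA4 x y)
        = mulDim4 a b c d f g h (a4Fwd a b c d f g x) (a4Fwd a b c d f g y)
    funext i
    fin_cases i
    · simp [a4Fwd, mulA4, mulDim4]
    · simp [a4Fwd, mulA4, mulDim4]
    · simp [a4Fwd, mulA4, mulDim4]; ring
    · simp [a4Fwd, mulA4, mulDim4]
      linear_combination (-(a * x 1 * y 1)) * hassoc
  refine ⟨E.symm, fun x y => ?_⟩
  apply E.injective
  rw [E.apply_symm_apply, key (E.symm x) (E.symm y), E.apply_symm_apply, E.apply_symm_apply]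
end

section
/- Let N be a 3-dimensional nonunital commutative associative ℂ-algebra such that every product of three elements of N is zero, the subspace N² = span_ℂ{x·y : x, y ∈ N} is 1-dimensional, and the annihilator {x ∈ N : x·y = 0 for all y ∈ N} equals N² (i.e. the induced quadratic form on N/N² with values in N² is nondegenerate). Then N is isomorphic to the model algebra I_{2,2}, i.e. the 3-dimensional nonunital ℂ-algebra with basis u, v, w and products u·v = v·u = w and all other products of basis vectors zero. -/
/-- The multiplication of the model algebra `I_{2,2} = 𝔪_{x,y}/(x², y²)` with basis
`u, v, w`: `u·v = v·u = w`, all other products of basis vectors zero. -/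
def mulI22 (p q : Fin 3 → ℂ) : Fin 3 → ℂ :=
  ![0, 0, p 0 * q 1 + p 1 * q 0]

/-!
Write `N² = ℂ w`. Since `w` annihilates `N`, the product descends to a symmetric bilinear
form on the plane `N / N²` with values in `ℂ w`, nondegenerate because the annihilator is
exactly `N²`. Over `ℂ` a binary quadratic form has a nonzero zero, which lifts to some
`u ∉ N²` with `u² = 0`. Nondegeneracy gives `v` with `u v = w`, and subtracting a multiple
of `u` from `v` makes `v² = 0`.
Then `u, v, w` is a basis with exactly the multiplication table of `I_{2,2}`.
-/

open Module Submodule Polynomial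

theorem exists_binary_quadratic_eq_zero {K : Type*} [Field K] [IsAlgClosed K] (s r t : K) :
    ∃ a b : K, (a ≠ 0 ∨ b ≠ 0) ∧ a * a * s + 2 * a * b * r + b * b * t = 0 := by
  by_cases hs : s = 0
  · exact ⟨1, 0, Or.inl one_ne_zero, by simp [hs]⟩
  obtain ⟨a, ha⟩ := IsAlgClosed.exists_root (C s * X ^ 2 + C (2 * r) * X + C t)
    (by rw [degree_quadratic hs]; decide)
  refine ⟨a, 1, Or.inr one_ne_zero, ?_⟩
  simp only [IsRoot, eval_add, eval_mul, eval_C, eval_pow, eval_X] at ha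
  linear_combination ha

section

variable {K N : Type*} [Field K] [NonUnitalCommRing N] [Module K N] [IsScalarTower K N N] {w : N}

theorem linearIndependent_of_mul_self_eq_zero {u v : N} (hw : ∀ y, w * y = 0) (hw0 : w ≠ 0)
    (huu : u * u = 0) (hvv : v * v = 0) (huv : u * v = w) :
    LinearIndependent K ![u, v, w] := by
  have hvu : v * u = w := mul_comm v u ▸ huv
  rw [Fintype.linearIndependent_iff]
  intro g hg
  simp only [Fin.sum_univ_three, Matrix.cons_val_zero, Matrix.cons_val_one, Matrix.cons_val_two,
    Matrix.head_cons, Matrix.tail_cons] at hg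
  have h0 : g 0 = 0 := by
    have := congrArg (· * v) hg
    simpa [add_mul, smul_mul_assoc, huv, hvv, hw, hw0] using this
  have h1 : g 1 = 0 := by
    have := congrArg (· * u) hg
    simpa [add_mul, smul_mul_assoc, huu, hvu, hw, hw0] using this
  have h2 : g 2 = 0 := by simpa [h0, h1, hw0] using hg
  intro i
  fin_cases i <;> assumption

variable [SMulCommClass K N N]

theorem exists_notMem_mul_self_eq_zero [IsAlgClosed K] (hmul : ∀ x y : N, x * y ∈ K ∙ w)
    (hrank : 1 < finrank K (N ⧸ K ∙ w)) : ∃ u, u ∉ K ∙ w ∧ u * u = 0 := by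
  have : Nontrivial (N ⧸ K ∙ w) := Module.nontrivial_of_finrank_pos (zero_lt_one.trans hrank)
  obtain ⟨x', hx'⟩ := exists_ne (0 : N ⧸ K ∙ w)
  obtain ⟨y', hxy⟩ := exists_linearIndependent_pair_of_one_lt_finrank hrank hx'
  obtain ⟨x, rfl⟩ := (K ∙ w).mkQ_surjective x'
  obtain ⟨y, rfl⟩ := (K ∙ w).mkQ_surjective y'
  obtain ⟨s, hs⟩ := mem_span_singleton.1 (hmul x x)
  obtain ⟨r, hr⟩ := mem_span_singleton.1 (hmul x y)
  obtain ⟨t, ht⟩ := mem_span_singleton.1 (hmul y y)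
  obtain ⟨a, b, hab, hq⟩ := exists_binary_quadratic_eq_zero s r t
  refine ⟨a • x + b • y, fun hu => ?_, ?_⟩
  · have := LinearIndependent.pair_iff.1 hxy a b
      (by rw [← map_smul, ← map_smul, ← map_add, mkQ_apply, Quotient.mk_eq_zero]; exact hu)
    tauto
  · calc (a • x + b • y) * (a • x + b • y)
        = (a * a) • (x * x) + (2 * a * b) • (x * y) + (b * b) • (y * y) := by
          simp only [add_mul, mul_add, smul_mul_assoc, mul_smul_comm, mul_comm y x]
          module
      _ = 0 := by
          rw [← hs, ← hr, ← ht, smul_smul, smul_smul, smul_smul, ← add_smul, ← add_smul,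
            hq, zero_smul]

theorem exists_mul_eq_and_mul_self_eq_zero [NeZero (2 : K)] (hmul : ∀ x y : N, x * y ∈ K ∙ w)
    {u z : N} (huu : u * u = 0) (huz : u * z ≠ 0) : ∃ v, u * v = w ∧ v * v = 0 := by
  obtain ⟨c, hc⟩ := mem_span_singleton.1 (hmul u z)
  have hc0 : c ≠ 0 := by rintro rfl; exact huz (by rw [← hc, zero_smul])
  obtain ⟨v₀, huv₀⟩ : ∃ v₀, u * v₀ = w :=
    ⟨c⁻¹ • z, by rw [mul_smul_comm, ← hc, smul_smul, inv_mul_cancel₀ hc0, one_smul]⟩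
  obtain ⟨d, hd⟩ := mem_span_singleton.1 (hmul v₀ v₀)
  -- `(v₀ - λ u)² = v₀² - 2 λ w` because `u² = 0` and `u v₀ = w`.
  refine ⟨v₀ - (d / 2) • u, ?_, ?_⟩
  · rw [mul_sub, huv₀, mul_smul_comm, huu, smul_zero, sub_zero]
  · simp only [sub_mul, mul_sub, smul_mul_assoc, mul_smul_comm, huu, smul_zero, mul_comm v₀ u,
      huv₀, ← hd]
    match_scalars
    field_simp
    ring

end

theorem Module.Basis.equivFun_mul_eq_mulI22 {N : Type*} [NonUnitalCommRing N] [Module ℂ N]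
    [SMulCommClass ℂ N N] [IsScalarTower ℂ N N] (b : Basis (Fin 3) ℂ N)
    (h00 : b 0 * b 0 = 0) (h11 : b 1 * b 1 = 0) (h01 : b 0 * b 1 = b 2)
    (h2 : ∀ y, b 2 * y = 0) (x y : N) :
    b.equivFun (x * y) = mulI22 (b.equivFun x) (b.equivFun y) := by
  obtain ⟨p, rfl⟩ := b.equivFun.symm.surjective x
  obtain ⟨q, rfl⟩ := b.equivFun.symm.surjective y
  rw [LinearEquiv.apply_symm_apply, LinearEquiv.apply_symm_apply, ← b.equivFun.eq_symm_apply]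
  have h10 : b 1 * b 0 = b 2 := mul_comm (b 1) (b 0) ▸ h01
  have h2' : ∀ y, y * b 2 = 0 := fun y => mul_comm (b 2) y ▸ h2 y
  simp only [Basis.equivFun_symm_apply, Fin.sum_univ_three, add_mul, mul_add, smul_mul_assoc,
    mul_smul_comm, h00, h11, h01, h10, h2, h2', smul_zero, add_zero, zero_add, mulI22,
    Matrix.cons_val_zero, Matrix.cons_val_one, Matrix.cons_val_two, Matrix.head_cons,
    Matrix.tail_cons, zero_smul]
  module

theorem iso_I22_of_nondegenerate_general
    (N : Type*) [NonUnitalCommRing N] [Module ℂ N]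
    [SMulCommClass ℂ N N] [IsScalarTower ℂ N N] [Module.Finite ℂ N]
    (hdim : Module.finrank ℂ N = 3)
    (hsq : Module.finrank ℂ
      ↥(Submodule.span ℂ {z : N | ∃ x y : N, z = x * y}) = 1)
    (hann : {x : N | ∀ y : N, x * y = 0}
      = ↑(Submodule.span ℂ {z : N | ∃ x y : N, z = x * y})) :
    ∃ e : N ≃ₗ[ℂ] (Fin 3 → ℂ),
      ∀ x y : N, e (x * y) = mulI22 (e x) (e y) := by
  set S := span ℂ {z : N | ∃ x y : N, z = x * y}
  obtain ⟨w, hwS, hw0⟩ := S.exists_mem_ne_zero_of_ne_bot (by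
    rintro h; rw [h, finrank_bot] at hsq; exact zero_ne_one hsq)
  have hSw : S = ℂ ∙ w := eq_span_singleton_of_mem_of_finrank_eq_one hsq hwS hw0
  have hmem_ann : ∀ x, (∀ y, x * y = 0) ↔ x ∈ ℂ ∙ w := fun x => by
    rw [← hSw, ← SetLike.mem_coe, ← hann, Set.mem_ofPred_eq]
  have hmul : ∀ x y : N, x * y ∈ ℂ ∙ w := fun x y => hSw ▸ subset_span ⟨x, y, rfl⟩
  have hrank : finrank ℂ (N ⧸ ℂ ∙ w) = 2 := by
    have := (ℂ ∙ w).finrank_quotient_add_finrank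
    rw [finrank_span_singleton hw0, hdim] at this
    omega
  obtain ⟨u, huw, huu⟩ := exists_notMem_mul_self_eq_zero hmul (by omega)
  obtain ⟨z, huz⟩ := not_forall.1 (mt (hmem_ann u).1 huw)
  obtain ⟨v, huv, hvv⟩ := exists_mul_eq_and_mul_self_eq_zero hmul huu huz
  have hw : ∀ y, w * y = 0 := (hmem_ann w).2 (mem_span_singleton_self w)
  let b := basisOfLinearIndependentOfCardEqFinrank
    (linearIndependent_of_mul_self_eq_zero hw hw0 huu hvv huv) (by rw [Fintype.card_fin, hdim])
  have hb : ⇑b = ![u, v, w] := coe_basisOfLinearIndependentOfCardEqFinrank _ _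
  exact ⟨b.equivFun, b.equivFun_mul_eq_mulI22 (by simp [hb, huu]) (by simp [hb, hvv])
    (by simp [hb, huv]) (by simpa [hb] using hw)⟩

/-- A 3-dimensional nonunital commutative associative `ℂ`-algebra with vanishing triple
products, 1-dimensional square `N²`, and annihilator equal to `N²` (nondegenerate
induced quadratic form) is isomorphic to the model algebra `I_{2,2}`. -/
theorem iso_I22_of_nondegenerate
    (N : Type*) [NonUnitalCommRing N] [Module ℂ N]
    [SMulCommClass ℂ N N] [IsScalarTower ℂ N N] [Module.Finite ℂ N]
    (hdim : Module.finrank ℂ N = 3)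
    (htriple : ∀ x y z : N, x * y * z = 0)
    (hsq : Module.finrank ℂ
      ↥(Submodule.span ℂ {z : N | ∃ x y : N, z = x * y}) = 1)
    (hann : {x : N | ∀ y : N, x * y = 0}
      = ↑(Submodule.span ℂ {z : N | ∃ x y : N, z = x * y})) :
    ∃ e : N ≃ₗ[ℂ] (Fin 3 → ℂ),
      ∀ x y : N, e (x * y) = mulI22 (e x) (e y) :=
  iso_I22_of_nondegenerate_general N hdim hsq hann
end

section
/- Let m ≥ 1 and 0 ≤ r ≤ m − 1, and let N and N' be two (m+1)-dimensional nonunital commutative associative ℂ-algebras such that in each algebra every product of three elements is zero, the subspace of products N² (respectively N'²) is 1-dimensional, and the annihilator {x : x·y = 0 for all y} has dimension r + 1 in both N and N'. Then N and N' are isomorphic as nonunital ℂ-algebras. (The isomorphism type Φ_{m,r} of an algebra with dimension vector (m,1) is determined by the rank m − r of its quadratic form.) -/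
/-!
Choosing a generator `w` of `N²` and a functional equal to `1` at `w` writes the product as
`x * y = B x y • w` for a symmetric bilinear form `B`; the annihilator is the kernel of `B`, and
it contains `w` because triple products vanish. A linear isomorphism that is an isometry from `B`
to `B'` and sends `w` to `w'` is then multiplicative. Such an isometry is glued from an isometry
of complements of the kernels, where both forms are nondegenerate and hence, over an
algebraically closed field, determined by the dimension alone, and any linear isomorphism of the
kernels sending `w` to `w'`.
-/

/-- The annihilator `{x ∈ N : x·y = 0 for all y ∈ N}` of a nonunital commutative
`ℂ`-algebra, as a `ℂ`-submodule. -/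
def annihilatorSubmodule (N : Type*) [NonUnitalCommRing N] [Module ℂ N]
    [IsScalarTower ℂ N N] : Submodule ℂ N where
  carrier := {x : N | ∀ y : N, x * y = 0}
  zero_mem' := by intro y; simp
  add_mem' := by
    intro a b ha hb y
    rw [add_mul, ha y, hb y, add_zero]
  smul_mem' := by
    intro c a ha y
    rw [smul_mul_assoc, ha y, smul_zero]

open Module

section LinearAlgebra

variable {K V V' : Type*} [Field K] [AddCommGroup V] [Module K V] [AddCommGroup V'] [Module K V']

theorem exists_linearEquiv_apply_eq [FiniteDimensional K V] [FiniteDimensional K V']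
    (h : finrank K V = finrank K V') {v : V} {v' : V'} (hv : v ≠ 0) (hv' : v' ≠ 0) :
    ∃ e : V ≃ₗ[K] V', e v = v' := by
  let e₀ := LinearEquiv.ofFinrankEq V V' h
  have he₀v : e₀ v ≠ 0 := e₀.map_ne_zero_iff.mpr hv
  obtain ⟨g, hg⟩ := Submodule.exists_linearEquiv_restrict_eq
    ((LinearEquiv.toSpanNonzeroSingleton K V' (e₀ v) he₀v).symm ≪≫ₗ
      LinearEquiv.toSpanNonzeroSingleton K V' v' hv')
  refine ⟨e₀ ≪≫ₗ g, ?_⟩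
  have := hg ⟨e₀ v, Submodule.mem_span_singleton_self _⟩
  rw [LinearEquiv.trans_apply, ← this, LinearEquiv.trans_apply,
    ← LinearEquiv.toSpanNonzeroSingleton_one K V' (e₀ v) he₀v, LinearEquiv.symm_apply_apply,
    LinearEquiv.toSpanNonzeroSingleton_one]

theorem LinearMap.IsSymm.apply_add_add_of_mem_ker {B : V →ₗ[K] V →ₗ[K] K} (hB : B.IsSymm)
    {a b : V} (ha : a ∈ LinearMap.ker B) (hb : b ∈ LinearMap.ker B) (x y : V) :
    B (x + a) (y + b) = B x y := by
  have hxb : B x b = 0 := by rw [← hB.eq b x, LinearMap.mem_ker.mp hb]; rfl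
  simp only [map_add, LinearMap.mem_ker.mp ha, hxb, add_zero]

end LinearAlgebra

section AlgClosed

variable {K V V' : Type*} [Field K] [IsAlgClosed K] [Invertible (2 : K)]
  [AddCommGroup V] [Module K V] [FiniteDimensional K V]
  [AddCommGroup V'] [Module K V'] [FiniteDimensional K V']

open LinearMap.BilinMap QuadraticMap in
theorem LinearMap.IsSymm.exists_isometry_of_nondegenerate
    {B : V →ₗ[K] V →ₗ[K] K} {B' : V' →ₗ[K] V' →ₗ[K] K} (hB : B.IsSymm) (hB' : B'.IsSymm)
    (hBn : B.Nondegenerate) (hBn' : B'.Nondegenerate) (h : finrank K V = finrank K V') :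
    ∃ e : V ≃ₗ[K] V', ∀ x y, B' (e x) (e y) = B x y := by
  have hQ : associated (toQuadraticMap B) = B := associated_left_inverse K hB.eq
  have hQ' : associated (toQuadraticMap B') = B' := associated_left_inverse K hB'.eq
  have hsum := QuadraticForm.equivalent_weightedSumSquares_of_isAlgClosed _ (hQ ▸ hBn.1)
  have hsum' := QuadraticForm.equivalent_weightedSumSquares_of_isAlgClosed _ (hQ' ▸ hBn'.1)
  rw [← h] at hsum'
  obtain ⟨e⟩ := hsum.trans hsum'.symm
  refine ⟨e.toLinearEquiv, fun x y => ?_⟩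
  have hcomp : (toQuadraticMap B').comp (e.toLinearEquiv : V →ₗ[K] V') = toQuadraticMap B :=
    QuadraticMap.ext e.map_app
  have hassoc := associated_comp (S := K) (toQuadraticMap B') (e.toLinearEquiv : V →ₗ[K] V')
  rw [hcomp, hQ, hQ'] at hassoc
  exact congr($hassoc x y).symm

theorem LinearMap.IsSymm.exists_isometry_apply_eq
    {B : V →ₗ[K] V →ₗ[K] K} {B' : V' →ₗ[K] V' →ₗ[K] K} (hB : B.IsSymm) (hB' : B'.IsSymm)
    (h : finrank K V = finrank K V')
    (hker : finrank K (LinearMap.ker B) = finrank K (LinearMap.ker B'))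
    {w : V} {w' : V'} (hw : w ∈ LinearMap.ker B) (hw' : w' ∈ LinearMap.ker B')
    (hw0 : w ≠ 0) (hw0' : w' ≠ 0) :
    ∃ e : V ≃ₗ[K] V', (∀ x y, B' (e x) (e y) = B x y) ∧ e w = w' := by
  obtain ⟨U, hU⟩ := (LinearMap.ker B).exists_isCompl
  obtain ⟨U', hU'⟩ := (LinearMap.ker B').exists_isCompl
  have hUU' : finrank K U = finrank K U' := by
    have := Submodule.finrank_add_eq_of_isCompl hU
    have := Submodule.finrank_add_eq_of_isCompl hU'
    omega
  obtain ⟨φ, hφ⟩ := (hB.domRestrict U).exists_isometry_of_nondegenerate (hB'.domRestrict U')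
    (hB.nondegenerate_restrict_of_isCompl_ker hU.symm)
    (hB'.nondegenerate_restrict_of_isCompl_ker hU'.symm) hUU'
  obtain ⟨ψ, hψ⟩ := exists_linearEquiv_apply_eq hker (v := ⟨w, hw⟩) (v' := ⟨w', hw'⟩)
    (by simpa using hw0) (by simpa using hw0')
  let P := Submodule.prodEquivOfIsCompl U (LinearMap.ker B) hU.symm
  let P' := Submodule.prodEquivOfIsCompl U' (LinearMap.ker B') hU'.symm
  have hP : ∀ p, P' (φ.prodCongr ψ p) = φ p.1 + ψ p.2 := fun _ => rfl
  refine ⟨P.symm ≪≫ₗ φ.prodCongr ψ ≪≫ₗ P', fun x y => ?_, ?_⟩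
  · obtain ⟨p, rfl⟩ := P.surjective x
    obtain ⟨q, rfl⟩ := P.surjective y
    simp only [LinearEquiv.trans_apply, LinearEquiv.symm_apply_apply, hP]
    rw [hB'.apply_add_add_of_mem_ker (ψ p.2).2 (ψ q.2).2,
      Submodule.coe_prodEquivOfIsCompl', Submodule.coe_prodEquivOfIsCompl',
      hB.apply_add_add_of_mem_ker p.2.2 q.2.2]
    exact hφ p.1 q.1
  · have : P.symm w = (0, ⟨w, hw⟩) :=
      Submodule.prodEquivOfIsCompl_symm_apply_right _ _ hU.symm ⟨w, hw⟩
    simp only [LinearEquiv.trans_apply, this, hP, hψ, map_zero, Submodule.coe_zero, zero_add]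

end AlgClosed

section Algebra

variable {K N N' : Type*} [Field K]

theorem exists_mul_eq_smul_of_finrank_span_mul_eq_one [NonUnitalNonAssocRing N] [Module K N]
    [SMulCommClass K N N] [IsScalarTower K N N]
    (h : finrank K (Submodule.span K {z : N | ∃ x y : N, z = x * y}) = 1) :
    ∃ w ∈ Submodule.span K {z : N | ∃ x y : N, z = x * y}, w ≠ 0 ∧
      ∃ B : N →ₗ[K] N →ₗ[K] K, ∀ x y, x * y = B x y • w := by
  obtain ⟨v, hv0, hv⟩ := finrank_eq_one_iff'.mp h
  have hw0 : (v : N) ≠ 0 := by simpa using hv0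
  obtain ⟨φ, hφ⟩ : ∃ φ : Dual K N, φ v ≠ 0 := by
    by_contra! hφ
    exact hw0 ((forall_dual_apply_eq_zero_iff K (v : N)).mp hφ)
  refine ⟨v, v.2, hw0, (LinearMap.mul K N).compr₂ ((φ v)⁻¹ • φ), fun x y => ?_⟩
  obtain ⟨c, hc⟩ := hv ⟨x * y, Submodule.subset_span ⟨x, y, rfl⟩⟩
  have hxy : x * y = c • (v : N) := congr(Subtype.val $hc.symm)
  simp [hxy, hφ]

theorem isSymm_of_mul_eq_smul [NonUnitalNonAssocCommRing N] [Module K N] {w : N} (hw : w ≠ 0)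
    {B : N →ₗ[K] N →ₗ[K] K} (hB : ∀ x y, x * y = B x y • w) : B.IsSymm :=
  ⟨fun x y => smul_left_injective K hw (by simp only [RingHom.id_apply, ← hB, mul_comm])⟩

theorem map_mul_of_isometry [NonUnitalNonAssocSemiring N] [Module K N]
    [NonUnitalNonAssocSemiring N'] [Module K N'] {w : N} {w' : N'} {B : N →ₗ[K] N →ₗ[K] K}
    {B' : N' →ₗ[K] N' →ₗ[K] K} (hB : ∀ x y, x * y = B x y • w)
    (hB' : ∀ x y, x * y = B' x y • w') (e : N →ₗ[K] N') (he : ∀ x y, B' (e x) (e y) = B x y)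
    (hew : e w = w') (x y : N) : e (x * y) = e x * e y := by
  rw [hB, hB', map_smul, hew, he]

end Algebra

section Annihilator

variable {N : Type*} [NonUnitalCommRing N] [Module ℂ N] [IsScalarTower ℂ N N]

theorem span_mul_le_annihilatorSubmodule (htriple : ∀ x y z : N, x * y * z = 0) :
    Submodule.span ℂ {z : N | ∃ x y : N, z = x * y} ≤ annihilatorSubmodule N :=
  Submodule.span_le.mpr fun _ ⟨x, y, hz⟩ t => hz ▸ htriple x y t

theorem annihilatorSubmodule_eq_ker {w : N} (hw : w ≠ 0) {B : N →ₗ[ℂ] N →ₗ[ℂ] ℂ}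
    (hB : ∀ x y, x * y = B x y • w) : annihilatorSubmodule N = LinearMap.ker B := by
  ext x
  simp only [LinearMap.mem_ker, LinearMap.ext_iff, LinearMap.zero_apply]
  exact forall_congr' fun y => by rw [hB, smul_eq_zero, or_iff_left hw]

end Annihilator

theorem iso_of_Phi_data_general
    (m r : ℕ)
    (N : Type*) [NonUnitalCommRing N] [Module ℂ N]
    [SMulCommClass ℂ N N] [IsScalarTower ℂ N N] [Module.Finite ℂ N]
    (N' : Type*) [NonUnitalCommRing N'] [Module ℂ N']
    [SMulCommClass ℂ N' N'] [IsScalarTower ℂ N' N'] [Module.Finite ℂ N']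
    (hdim : Module.finrank ℂ N = m + 1)
    (hdim' : Module.finrank ℂ N' = m + 1)
    (htriple : ∀ x y z : N, x * y * z = 0)
    (htriple' : ∀ x y z : N', x * y * z = 0)
    (hsq : Module.finrank ℂ
      ↥(Submodule.span ℂ {z : N | ∃ x y : N, z = x * y}) = 1)
    (hsq' : Module.finrank ℂ
      ↥(Submodule.span ℂ {z : N' | ∃ x y : N', z = x * y}) = 1)
    (hann : Module.finrank ℂ ↥(annihilatorSubmodule N) = r + 1)
    (hann' : Module.finrank ℂ ↥(annihilatorSubmodule N') = r + 1) :
    ∃ e : N ≃ₗ[ℂ] N', ∀ x y : N, e (x * y) = e x * e y := by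
  obtain ⟨w, hwS, hw0, B, hB⟩ := exists_mul_eq_smul_of_finrank_span_mul_eq_one hsq
  obtain ⟨w', hwS', hw0', B', hB'⟩ := exists_mul_eq_smul_of_finrank_span_mul_eq_one hsq'
  have hann_eq := annihilatorSubmodule_eq_ker hw0 hB
  have hann_eq' := annihilatorSubmodule_eq_ker hw0' hB'
  have hw : w ∈ LinearMap.ker B := hann_eq ▸ span_mul_le_annihilatorSubmodule htriple hwS
  have hw' : w' ∈ LinearMap.ker B' := hann_eq' ▸ span_mul_le_annihilatorSubmodule htriple' hwS'
  obtain ⟨e, he, hew⟩ := (isSymm_of_mul_eq_smul hw0 hB).exists_isometry_apply_eq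
    (isSymm_of_mul_eq_smul hw0' hB') (hdim.trans hdim'.symm)
    (by rw [← hann_eq, ← hann_eq', hann, hann']) hw hw' hw0 hw0'
  exact ⟨e, map_mul_of_isometry hB hB' e.toLinearMap he hew⟩

/-- The isomorphism type `Φ_{m,r}` of an algebra with dimension vector `(m,1)` is
determined by the rank `m − r` of its quadratic form: two `(m+1)`-dimensional nonunital
commutative associative `ℂ`-algebras with vanishing triple products, 1-dimensional
squares, and annihilators of dimension `r + 1` are isomorphic. -/
theorem iso_of_Phi_data
    (m r : ℕ) (hm : 1 ≤ m) (hr : r + 1 ≤ m)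
    (N : Type*) [NonUnitalCommRing N] [Module ℂ N]
    [SMulCommClass ℂ N N] [IsScalarTower ℂ N N] [Module.Finite ℂ N]
    (N' : Type*) [NonUnitalCommRing N'] [Module ℂ N']
    [SMulCommClass ℂ N' N'] [IsScalarTower ℂ N' N'] [Module.Finite ℂ N']
    (hdim : Module.finrank ℂ N = m + 1)
    (hdim' : Module.finrank ℂ N' = m + 1)
    (htriple : ∀ x y z : N, x * y * z = 0)
    (htriple' : ∀ x y z : N', x * y * z = 0)
    (hsq : Module.finrank ℂ
      ↥(Submodule.span ℂ {z : N | ∃ x y : N, z = x * y}) = 1)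
    (hsq' : Module.finrank ℂ
      ↥(Submodule.span ℂ {z : N' | ∃ x y : N', z = x * y}) = 1)
    (hann : Module.finrank ℂ ↥(annihilatorSubmodule N) = r + 1)
    (hann' : Module.finrank ℂ ↥(annihilatorSubmodule N') = r + 1) :
    ∃ e : N ≃ₗ[ℂ] N', ∀ x y : N, e (x * y) = e x * e y :=
  iso_of_Phi_data_general m r N N' hdim hdim' htriple htriple' hsq hsq' hann hann'
end

section
/- Let ℂ[x, y] be the polynomial ring in two variables, and let J ⊆ ℂ[x, y] be the ideal generated by all monomials x^i y^j with 3i + 5j ≥ 12 (the monomials of weighted degree greater than 11 for the weights deg x = 3, deg y = 5). Then for every a ∈ ℂ, the quotient ℂ-algebras ℂ[x, y]/(J + (y² + a·x²·y)) and ℂ[x, y]/(J + (y²)) are isomorphic. (Consequently every associative algebra of this form is isomorphic to the nilpotent algebra of the Thom–Boardman singularity Σ^{2,1,1}.) -/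
open MvPolynomial

/-- The ideal of `ℂ[x, y]` generated by the monomials `x^i y^j` of weighted degree
`3i + 5j ≥ 12` (weights `deg x = 3`, `deg y = 5`). -/
noncomputable def weightedTruncationIdeal : Ideal (MvPolynomial (Fin 2) ℂ) :=
  Ideal.span {p : MvPolynomial (Fin 2) ℂ |
    ∃ i j : ℕ, 12 ≤ 3 * i + 5 * j ∧ p = X 0 ^ i * X 1 ^ j}

noncomputable def subst (c : ℂ) : MvPolynomial (Fin 2) ℂ →ₐ[ℂ] MvPolynomial (Fin 2) ℂ :=
  aeval ![X 0, X 1 + C c * X 0 ^ 2]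

lemma subst_comp (c : ℂ) : (subst (-c)).comp (subst c) = AlgHom.id ℂ _ := by
  apply MvPolynomial.algHom_ext
  intro i
  fin_cases i <;> simp [subst]

noncomputable def substEquiv (c : ℂ) : MvPolynomial (Fin 2) ℂ ≃ₐ[ℂ] MvPolynomial (Fin 2) ℂ :=
  AlgEquiv.ofAlgHom (subst c) (subst (-c))
    (by have := subst_comp (-c); rwa [neg_neg] at this) (subst_comp c)

lemma map_le_self (c : ℂ) :
    weightedTruncationIdeal.map (subst c : MvPolynomial (Fin 2) ℂ →+* MvPolynomial (Fin 2) ℂ)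
      ≤ weightedTruncationIdeal := by
  rw [Ideal.map_le_iff_le_comap, weightedTruncationIdeal, Ideal.span_le]
  rintro p ⟨i, j, hij, rfl⟩
  simp only [Ideal.mem_comap, map_mul, map_pow, SetLike.mem_coe, RingHom.coe_coe,
    AlgHom.coe_toRingHom]
  have h0 : subst c (X 0) = X 0 := by simp [subst]
  have h1 : subst c (X 1) = X 1 + C c * X 0 ^ 2 := by simp [subst]
  rw [h0, h1, add_pow, Finset.mul_sum]
  apply Ideal.sum_mem
  intro k hk
  have hk' : k ≤ j := Finset.mem_range_succ_iff.mp hk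
  have hgen : (X 0 : MvPolynomial (Fin 2) ℂ) ^ (i + 2 * (j - k)) * X 1 ^ k ∈
      Ideal.span {p : MvPolynomial (Fin 2) ℂ |
        ∃ i j : ℕ, 12 ≤ 3 * i + 5 * j ∧ p = X 0 ^ i * X 1 ^ j} :=
    Ideal.subset_span ⟨i + 2 * (j - k), k, by omega, rfl⟩
  have h := Ideal.mul_mem_left _
    (C c ^ (j - k) * (j.choose k : MvPolynomial (Fin 2) ℂ)) hgen
  convert h using 1
  rw [pow_add, pow_mul]
  ring

lemma ringHom_comp (c : ℂ) :
    (subst c : MvPolynomial (Fin 2) ℂ →+* MvPolynomial (Fin 2) ℂ).comp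
      (subst (-c) : MvPolynomial (Fin 2) ℂ →+* MvPolynomial (Fin 2) ℂ) = RingHom.id _ := by
  have h := subst_comp (-c)
  rw [neg_neg] at h
  refine RingHom.ext fun p => ?_
  exact DFunLike.congr_fun h p

lemma map_eq_self (c : ℂ) :
    weightedTruncationIdeal.map (subst c : MvPolynomial (Fin 2) ℂ →+* MvPolynomial (Fin 2) ℂ)
      = weightedTruncationIdeal := by
  refine le_antisymm (map_le_self c) ?_
  have h2 : (weightedTruncationIdeal.map
        (subst (-c) : MvPolynomial (Fin 2) ℂ →+* MvPolynomial (Fin 2) ℂ)).map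
        (subst c : MvPolynomial (Fin 2) ℂ →+* MvPolynomial (Fin 2) ℂ)
      ≤ weightedTruncationIdeal.map
        (subst c : MvPolynomial (Fin 2) ℂ →+* MvPolynomial (Fin 2) ℂ) :=
    Ideal.map_mono (map_le_self (-c))
  rwa [Ideal.map_map, ringHom_comp, Ideal.map_id] at h2

/-- For every `a ∈ ℂ`, the quotients `ℂ[x, y]/(J + (y² + a·x²·y))` and
`ℂ[x, y]/(J + (y²))` are isomorphic as `ℂ`-algebras, where `J` is the ideal of
monomials of weighted degree at least `12` for the weights `deg x = 3`, `deg y = 5`.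
Consequently every associative algebra of this form is isomorphic to the nilpotent
algebra of the Thom–Boardman singularity `Σ^{2,1,1}`. -/
theorem quotient_iso_Sigma211 (a : ℂ) :
    Nonempty
      ((MvPolynomial (Fin 2) ℂ ⧸
          (weightedTruncationIdeal ⊔
            Ideal.span {(X 1 ^ 2 + C a * X 0 ^ 2 * X 1 : MvPolynomial (Fin 2) ℂ)}))
        ≃ₐ[ℂ]
       (MvPolynomial (Fin 2) ℂ ⧸
          (weightedTruncationIdeal ⊔
            Ideal.span {(X 1 ^ 2 : MvPolynomial (Fin 2) ℂ)}))) := by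
  set c : ℂ := a / 2 with hc
  have hcoe : ((substEquiv c : MvPolynomial (Fin 2) ℂ ≃ₐ[ℂ] _) :
      MvPolynomial (Fin 2) ℂ →+* MvPolynomial (Fin 2) ℂ)
      = (subst c : MvPolynomial (Fin 2) ℂ →+* _) := rfl
  have key : (weightedTruncationIdeal ⊔
        Ideal.span {(X 1 ^ 2 + C a * X 0 ^ 2 * X 1 : MvPolynomial (Fin 2) ℂ)})
      = (weightedTruncationIdeal ⊔
          Ideal.span {(X 1 ^ 2 : MvPolynomial (Fin 2) ℂ)}).map
        ((substEquiv c : MvPolynomial (Fin 2) ℂ ≃ₐ[ℂ] _) :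
          MvPolynomial (Fin 2) ℂ →+* MvPolynomial (Fin 2) ℂ) := by
    rw [hcoe, Ideal.map_sup, map_eq_self, Ideal.map_span, Set.image_singleton]
    have hca : (C a : MvPolynomial (Fin 2) ℂ) = C c + C c := by
      rw [← C_add]; congr 1; rw [hc]; ring
    have himg : (subst c) (X 1 ^ 2)
        = X 1 ^ 2 + C a * X 0 ^ 2 * X 1 + C c ^ 2 * (X 0 ^ 4 * X 1 ^ 0) := by
      have hstep : subst c (X 1) = X 1 + C c * X 0 ^ 2 := by simp [subst]
      rw [map_pow, hstep, hca]
      ring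
    simp only [RingHom.coe_coe]
    rw [himg]
    have hx4 : (C c ^ 2 * (X 0 ^ 4 * X 1 ^ 0) : MvPolynomial (Fin 2) ℂ)
        ∈ weightedTruncationIdeal :=
      Ideal.mul_mem_left _ _ (Ideal.subset_span ⟨4, 0, by norm_num, rfl⟩)
    apply le_antisymm
    · apply sup_le le_sup_left
      rw [Ideal.span_le, Set.singleton_subset_iff, SetLike.mem_coe]
      have hm : (X 1 ^ 2 + C a * X 0 ^ 2 * X 1 + C c ^ 2 * (X 0 ^ 4 * X 1 ^ 0))
            - C c ^ 2 * (X 0 ^ 4 * X 1 ^ 0)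
          ∈ weightedTruncationIdeal ⊔ Ideal.span
            {(X 1 ^ 2 + C a * X 0 ^ 2 * X 1 + C c ^ 2 * (X 0 ^ 4 * X 1 ^ 0) :
              MvPolynomial (Fin 2) ℂ)} :=
        Ideal.sub_mem _ (Ideal.mem_sup_right (Ideal.subset_span rfl))
          (Ideal.mem_sup_left hx4)
      rwa [add_sub_cancel_right] at hm
    · apply sup_le le_sup_left
      rw [Ideal.span_le, Set.singleton_subset_iff, SetLike.mem_coe]
      exact Ideal.add_mem _ (Ideal.mem_sup_right (Ideal.subset_span rfl))
        (Ideal.mem_sup_left hx4)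
  exact ⟨(Ideal.quotientEquivAlg _ _ (substEquiv c) key).symm⟩
end
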